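/- (Unconditional numerical energy conservation.) Assume ω_j ≠ 0 for all j and ω = min_j ω_j ≥ (1/2)c₀²‖A‖ + 1. Then there is a constant C depending only on c₀, c₁, ‖A‖, ‖Ωq_0‖ and ‖q̇_0‖ (but not on n, h, d or the numerical trajectory) such that |H(q_n, q̇_n) − H(q_0, q̇_0)| ≤ C min(h, ω^{-1}) + C h² for all n ∈ ℕ. -/

import Mathlib

open scoped BigOperators

/-- `sinc ξ = sin ξ / ξ` with `sinc 0 = 1`. -/
noncomputable def sinc (x : ℝ) : ℝ := if x = 0 then 1 else Real.sin x / x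

/-- Entrywise (diagonal-matrix) action of a real function family on `ℂ^d`. -/
noncomputable def dOp {d : ℕ} (f : Fin d → ℝ) (q : EuclideanSpace ℂ (Fin d)) :
    EuclideanSpace ℂ (Fin d) := WithLp.toLp 2 (fun i => (f i : ℂ) * q i)

/-- Position update of the trigonometric integrator for the linear force `g(q) = -A q`:
`q_{n+1} = cos(hΩ) q_n + h sinc(hΩ) q̇_n + ½h² sinc(hΩ) Ψ₁ g(Φ q_n)`. -/
noncomputable def trigStepQ {d : ℕ} (h : ℝ) (ω : Fin d → ℝ) (ψ₁ φ : ℝ → ℝ)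
    (A : EuclideanSpace ℂ (Fin d) →L[ℂ] EuclideanSpace ℂ (Fin d))
    (q p : EuclideanSpace ℂ (Fin d)) : EuclideanSpace ℂ (Fin d) :=
  dOp (fun i => Real.cos (h * ω i)) q + h • dOp (fun i => sinc (h * ω i)) p
    + (h ^ 2 / 2) • dOp (fun i => sinc (h * ω i))
        (dOp (fun i => ψ₁ (h * ω i)) (-(A (dOp (fun i => φ (h * ω i)) q))))

/-- Velocity update of the trigonometric integrator for the linear force `g(q) = -A q`:
`q̇_{n+1} = -Ω sin(hΩ) q_n + cos(hΩ) q̇_n + ½h (cos(hΩ) Ψ₁ g(Φ q_n) + Ψ₁ g(Φ q_{n+1}))`. -/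
noncomputable def trigStepP {d : ℕ} (h : ℝ) (ω : Fin d → ℝ) (ψ₁ φ : ℝ → ℝ)
    (A : EuclideanSpace ℂ (Fin d) →L[ℂ] EuclideanSpace ℂ (Fin d))
    (q p : EuclideanSpace ℂ (Fin d)) : EuclideanSpace ℂ (Fin d) :=
  -(dOp (fun i => ω i * Real.sin (h * ω i)) q) + dOp (fun i => Real.cos (h * ω i)) p
    + (h / 2) • (dOp (fun i => Real.cos (h * ω i))
          (dOp (fun i => ψ₁ (h * ω i)) (-(A (dOp (fun i => φ (h * ω i)) q))))
        + dOp (fun i => ψ₁ (h * ω i))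
            (-(A (dOp (fun i => φ (h * ω i)) (trigStepQ h ω ψ₁ φ A q p)))))

/-- The modified energy
`ℋ(q,q̇) = ½‖Ωq‖² + ½‖q̇‖² + ½ Re((cos(hΩ)Φq)* A Φq) − ⅛h²‖Ψ₁ A Φq‖²`. -/
noncomputable def modEnergy {d : ℕ} (h : ℝ) (ω : Fin d → ℝ) (ψ₁ φ : ℝ → ℝ)
    (A : EuclideanSpace ℂ (Fin d) →L[ℂ] EuclideanSpace ℂ (Fin d))
    (q p : EuclideanSpace ℂ (Fin d)) : ℝ :=
  (1 / 2) * ‖dOp ω q‖ ^ 2 + (1 / 2) * ‖p‖ ^ 2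
    + (1 / 2) * (inner (𝕜 := ℂ) (dOp (fun i => Real.cos (h * ω i)) (dOp (fun i => φ (h * ω i)) q))
        (A (dOp (fun i => φ (h * ω i)) q))).re
    - (1 / 8) * h ^ 2 * ‖dOp (fun i => ψ₁ (h * ω i)) (A (dOp (fun i => φ (h * ω i)) q))‖ ^ 2

/-- The total energy `H(q,q̇) = ½‖Ωq‖² + ½‖q̇‖² + ½ q* A q` of `q̈ = -Ω²q - Aq`. -/
noncomputable def energy {d : ℕ} (ω : Fin d → ℝ)
    (A : EuclideanSpace ℂ (Fin d) →L[ℂ] EuclideanSpace ℂ (Fin d))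
    (q p : EuclideanSpace ℂ (Fin d)) : ℝ :=
  (1 / 2) * ‖dOp ω q‖ ^ 2 + (1 / 2) * ‖p‖ ^ 2 + (1 / 2) * (inner (𝕜 := ℂ) q (A q)).re

/-!
The integrator is a half kick `p' = p - (h/2) sinc(hΩ) ΦAΦ q`, an exact rotation of `(Ωq, p')` by
the angles `hω_j`, and a second half kick. The rotation preserves `‖Ωq‖² + ‖p'‖²`, and the change
of the filtered potential `½ Re⟨cos(hΩ) Φq, AΦq⟩` under it is exactly the work of the two kicks,
so the modified energy `ℋ` is conserved along the numerical trajectory.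

When `ω ≥ ½c₀²‖A‖ + 1`, the perturbation terms of `ℋ` are at most `3/8 ‖Ωq‖²`, so conservation of
`ℋ` bounds `‖Ωq_n‖` by the initial data. Finally `H - ℋ` is controlled by `1 - cos(hω_j)φ(hω_j)`
and `1 - φ(hω_j)`, which are `O(min(h, ω⁻¹) ω_j)`, and by the `h²` term of `ℋ`; the factors
`ω_j` are absorbed by `‖q‖ ≤ ‖Ωq‖ / ω`.
-/

open scoped InnerProductSpace

lemma mul_sinc (x : ℝ) : x * sinc x = Real.sin x := by
  unfold sinc
  split_ifs with hx
  · simp [hx]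
  · field_simp

lemma abs_mul_psi_mul_le {ψ₁ φ : ℝ → ℝ} {c₀ : ℝ} (hψ : ∀ ξ, ψ₁ ξ = sinc ξ * φ ξ)
    (hφb : ∀ ξ, |φ ξ| ≤ c₀) (h w : ℝ) : |h * ψ₁ (h * w) * w| ≤ c₀ := by
  rw [hψ, show h * (sinc (h * w) * φ (h * w)) * w = (h * w) * sinc (h * w) * φ (h * w) by ring,
    mul_sinc, abs_mul]
  exact (mul_le_of_le_one_left (abs_nonneg _) (Real.abs_sin_le_one _)).trans (hφb _)

lemma abs_le_mul_min_mul {x a b h w wmin : ℝ} (ha : 0 ≤ a) (hb : 0 ≤ b) (hh : 0 ≤ h)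
    (hwmin : 0 < wmin) (hw : wmin ≤ w) (hxa : |x| ≤ a) (hxb : |x| ≤ b * (h * w)) :
    |x| ≤ (a + b) * min h wmin⁻¹ * w := by
  rcases le_total h wmin⁻¹ with hm | hm
  · rw [min_eq_left hm]
    nlinarith [mul_nonneg ha (mul_nonneg hh (hwmin.le.trans hw))]
  · rw [min_eq_right hm]
    have : 1 ≤ wmin⁻¹ * w := by rwa [inv_mul_eq_div, one_le_div hwmin]
    nlinarith [mul_nonneg hb (mul_nonneg (inv_nonneg.2 hwmin.le) (hwmin.le.trans hw))]

lemma one_le_of_abs_le_of_abs_sub_one_le {φ : ℝ → ℝ} {c₀ c₁ : ℝ} (hφb : ∀ ξ, |φ ξ| ≤ c₀)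
    (hφ1 : ∀ ξ, |φ ξ - 1| ≤ c₁ * |ξ|) : 1 ≤ c₀ := by
  have : φ 0 = 1 := by simpa [sub_eq_zero] using hφ1 0
  simpa [this] using hφb 0

lemma nonneg_of_abs_sub_one_le {φ : ℝ → ℝ} {c₁ : ℝ} (hφ1 : ∀ ξ, |φ ξ - 1| ≤ c₁ * |ξ|) :
    0 ≤ c₁ :=
  (abs_nonneg _).trans (by simpa using hφ1 1)

lemma abs_one_sub_le {φ : ℝ → ℝ} {c₀ : ℝ} (hφb : ∀ ξ, |φ ξ| ≤ c₀) (ξ : ℝ) :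
    |1 - φ ξ| ≤ 1 + c₀ :=
  (abs_sub _ _).trans (by rw [abs_one]; linarith [hφb ξ])

lemma abs_one_sub_le_mul {φ : ℝ → ℝ} {c₁ : ℝ} (hφ1 : ∀ ξ, |φ ξ - 1| ≤ c₁ * |ξ|) (ξ : ℝ) :
    |1 - φ ξ| ≤ (1 + c₁) * |ξ| := by
  rw [abs_sub_comm]
  nlinarith [hφ1 ξ, abs_nonneg ξ]

lemma abs_one_sub_cos_mul_le {φ : ℝ → ℝ} {c₀ : ℝ} (hφb : ∀ ξ, |φ ξ| ≤ c₀) (ξ : ℝ) :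
    |1 - Real.cos ξ * φ ξ| ≤ 1 + c₀ :=
  abs_one_sub_le (φ := fun ξ => Real.cos ξ * φ ξ) (fun ξ => by
    rw [abs_mul]
    exact (mul_le_of_le_one_left (abs_nonneg _) (Real.abs_cos_le_one _)).trans (hφb ξ)) ξ

lemma abs_one_sub_cos_mul_le_mul {φ : ℝ → ℝ} {c₁ : ℝ} (hφ1 : ∀ ξ, |φ ξ - 1| ≤ c₁ * |ξ|) (ξ : ℝ) :
    |1 - Real.cos ξ * φ ξ| ≤ (1 + c₁) * |ξ| := by
  have hcos : |1 - Real.cos ξ| ≤ |ξ| := by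
    simpa using Real.abs_cos_sub_cos_le 0 ξ
  have hφ : |Real.cos ξ * (1 - φ ξ)| ≤ c₁ * |ξ| := by
    rw [abs_mul, abs_sub_comm]
    exact (mul_le_of_le_one_left (abs_nonneg _) (Real.abs_cos_le_one _)).trans (hφ1 ξ)
  calc |1 - Real.cos ξ * φ ξ| = |(1 - Real.cos ξ) + Real.cos ξ * (1 - φ ξ)| := by ring_nf
    _ ≤ |1 - Real.cos ξ| + |Real.cos ξ * (1 - φ ξ)| := abs_add_le _ _
    _ ≤ (1 + c₁) * |ξ| := by linarith

lemma coercivity_coeff_le {k w t : ℝ} (hk0 : 0 ≤ k) (hk : k ≤ 2 * (w - 1)) :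
    (1 / 2) * k * t ^ 2 + (1 / 8) * (k / w) ^ 2 * t ^ 2 ≤ (3 / 8) * (w * t) ^ 2 := by
  have hw : 1 ≤ w := by linarith
  have hkw : (k / w) ^ 2 ≤ 2 * k := by
    have h2 : k / w ≤ 2 := by rw [div_le_iff₀ (by linarith)]; linarith
    nlinarith [div_le_self hk0 hw, div_nonneg hk0 (by linarith : (0 : ℝ) ≤ w)]
  calc (1 / 2) * k * t ^ 2 + (1 / 8) * (k / w) ^ 2 * t ^ 2 ≤ (3 / 4) * k * t ^ 2 := by
        nlinarith [sq_nonneg t]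
    _ ≤ (3 / 8) * (w * t) ^ 2 := by nlinarith [sq_nonneg t, sq_nonneg (w - 2)]

section

variable {d : ℕ}

local notation "V" => EuclideanSpace ℂ (Fin d)

@[simp]
lemma dOp_apply (f : Fin d → ℝ) (x : V) (i : Fin d) : dOp f x i = f i * x i := rfl

lemma dOp_add (f : Fin d → ℝ) (x y : V) : dOp f (x + y) = dOp f x + dOp f y := by
  ext i; simp [mul_add]

lemma dOp_smul (f : Fin d → ℝ) (a : ℂ) (x : V) : dOp f (a • x) = a • dOp f x := by
  ext i; simp [mul_left_comm]

lemma dOp_real_smul (f : Fin d → ℝ) (a : ℝ) (x : V) : dOp f (a • x) = a • dOp f x := by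
  ext i; simp [mul_left_comm]

lemma dOp_neg (f : Fin d → ℝ) (x : V) : dOp f (-x) = -dOp f x := by
  ext i; simp

lemma dOp_sub (f : Fin d → ℝ) (x y : V) : dOp f (x - y) = dOp f x - dOp f y := by
  ext i; simp [mul_sub]

lemma dOp_one (x : V) : dOp 1 x = x := by
  ext i; simp

lemma dOp_dOp (f g : Fin d → ℝ) (x : V) : dOp f (dOp g x) = dOp (f * g) x := by
  ext i; simp [mul_assoc]

lemma dOp_comm (f g : Fin d → ℝ) (x : V) : dOp f (dOp g x) = dOp g (dOp f x) := by
  rw [dOp_dOp, dOp_dOp, mul_comm]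

lemma dOp_add_dOp (f g : Fin d → ℝ) (x : V) : dOp f x + dOp g x = dOp (f + g) x := by
  ext i; simp [add_mul]

lemma real_smul_dOp (a : ℝ) (f : Fin d → ℝ) (x : V) : a • dOp f x = dOp (a • f) x := by
  ext i; simp [mul_assoc]

lemma inner_dOp_left (f : Fin d → ℝ) (x y : V) : ⟪dOp f x, y⟫_ℂ = ⟪x, dOp f y⟫_ℂ := by
  simp only [PiLp.inner_apply, dOp_apply, RCLike.inner_apply, map_mul, Complex.conj_ofReal]
  exact Finset.sum_congr rfl fun i _ => by ring

lemma re_inner_real_smul_left (r : ℝ) (x y : V) : (⟪r • x, y⟫_ℂ).re = r * (⟪x, y⟫_ℂ).re := by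
  simp [inner_smul_left_eq_smul]

lemma re_inner_real_smul_right (r : ℝ) (x y : V) : (⟪x, r • y⟫_ℂ).re = r * (⟪x, y⟫_ℂ).re := by
  simp [inner_smul_right_eq_smul]

lemma norm_add_real_smul_sq (x y : V) (t : ℝ) :
    ‖x + t • y‖ ^ 2 = ‖x‖ ^ 2 + 2 * t * (⟪x, y⟫_ℂ).re + t ^ 2 * ‖y‖ ^ 2 := by
  rw [norm_add_sq (𝕜 := ℂ), norm_smul, RCLike.re_to_complex, re_inner_real_smul_right,
    Real.norm_eq_abs, mul_pow, sq_abs]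
  ring

lemma abs_re_inner_le_mul {x y : V} {a b : ℝ} (hx : ‖x‖ ≤ a) (hy : ‖y‖ ≤ b) :
    |(⟪x, y⟫_ℂ).re| ≤ a * b :=
  (Complex.abs_re_le_norm _).trans <| (norm_inner_le_norm x y).trans <|
    mul_le_mul hx hy (norm_nonneg _) ((norm_nonneg _).trans hx)

lemma norm_dOp_sq (f : Fin d → ℝ) (x : V) : ‖dOp f x‖ ^ 2 = ∑ i, f i ^ 2 * ‖x i‖ ^ 2 := by
  simp [EuclideanSpace.norm_sq_eq, mul_pow]

lemma norm_dOp_le_mul_norm_dOp {f g : Fin d → ℝ} {C : ℝ} (hC : 0 ≤ C)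
    (hfg : ∀ i, |f i| ≤ C * |g i|) (x : V) : ‖dOp f x‖ ≤ C * ‖dOp g x‖ := by
  refine (pow_le_pow_iff_left₀ (norm_nonneg _) (by positivity) two_ne_zero).1 ?_
  rw [mul_pow, norm_dOp_sq, norm_dOp_sq, Finset.mul_sum]
  refine Finset.sum_le_sum fun i _ => ?_
  have hi : f i ^ 2 ≤ C ^ 2 * g i ^ 2 := by
    rw [← sq_abs (f i), ← sq_abs (g i), ← mul_pow]
    exact pow_le_pow_left₀ (abs_nonneg _) (hfg i) 2
  rw [← mul_assoc]
  exact mul_le_mul_of_nonneg_right hi (sq_nonneg _)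

lemma norm_dOp_le {f : Fin d → ℝ} {C : ℝ} (hC : 0 ≤ C) (hf : ∀ i, |f i| ≤ C) (x : V) :
    ‖dOp f x‖ ≤ C * ‖x‖ := by
  simpa [dOp_one] using norm_dOp_le_mul_norm_dOp (g := 1) hC (by simpa using hf) x

lemma mul_norm_le_norm_dOp {g : Fin d → ℝ} {c : ℝ} (hc : 0 < c) (hg : ∀ i, c ≤ |g i|) (x : V) :
    c * ‖x‖ ≤ ‖dOp g x‖ := by
  have := norm_dOp_le_mul_norm_dOp (f := 1) (inv_nonneg.2 hc.le)
    (fun i => by simpa [← div_eq_inv_mul, one_le_div hc] using hg i) x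
  rw [dOp_one] at this
  rwa [← le_inv_mul_iff₀ hc]

lemma norm_sub_dOp_le_mul_min {g : ℝ → ℝ} {a b : ℝ} (ha : 0 ≤ a) (hb : 0 ≤ b)
    (hga : ∀ ξ, |1 - g ξ| ≤ a) (hgb : ∀ ξ, |1 - g ξ| ≤ b * |ξ|) {h ωmin : ℝ} (hh : 0 ≤ h)
    (hωmin : 0 < ωmin) {ω : Fin d → ℝ} (hω : ∀ i, ωmin ≤ ω i) (x : V) :
    ‖x - dOp (fun i => g (h * ω i)) x‖ ≤ (a + b) * min h ωmin⁻¹ * ‖dOp ω x‖ := by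
  have hx : x - dOp (fun i => g (h * ω i)) x = dOp (fun i => 1 - g (h * ω i)) x := by
    ext i; simp [sub_mul]
  rw [hx]
  refine norm_dOp_le_mul_norm_dOp (by positivity) (fun i => ?_) x
  have hωi : 0 < ω i := hωmin.trans_le (hω i)
  rw [abs_of_pos hωi]
  refine abs_le_mul_min_mul ha hb hh hωmin (hω i) (hga _) ?_
  simpa only [abs_of_nonneg (mul_nonneg hh hωi.le)] using hgb (h * ω i)

noncomputable def filteredEnergy (h : ℝ) (ω c σ : Fin d → ℝ) (B : V →ₗ[ℂ] V) (q p : V) : ℝ :=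
  (1 / 2) * ‖dOp ω q‖ ^ 2 + (1 / 2) * ‖p‖ ^ 2 + (1 / 2) * (⟪dOp c q, B q⟫_ℂ).re
    - (1 / 8) * h ^ 2 * ‖dOp σ (B q)‖ ^ 2

lemma norm_rotate_sq_add {c s : Fin d → ℝ} (hcs : ∀ i, c i ^ 2 + s i ^ 2 = 1) (u v : V) :
    ‖dOp c u + dOp s v‖ ^ 2 + ‖dOp c v - dOp s u‖ ^ 2 = ‖u‖ ^ 2 + ‖v‖ ^ 2 := by
  simp only [EuclideanSpace.norm_sq_eq, ← Finset.sum_add_distrib]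
  refine Finset.sum_congr rfl fun i _ => ?_
  simp only [PiLp.add_apply, PiLp.sub_apply, dOp_apply, Complex.sq_norm, Complex.normSq_apply,
    Complex.add_re, Complex.add_im, Complex.sub_re, Complex.sub_im, Complex.mul_re,
    Complex.mul_im, Complex.ofReal_re, Complex.ofReal_im]
  linear_combination ((u i).re ^ 2 + (u i).im ^ 2 + (v i).re ^ 2 + (v i).im ^ 2) * hcs i

lemma re_inner_symm_of_isSymmetric {B : V →ₗ[ℂ] V} (hB : B.IsSymmetric) (x y : V) :
    (⟪x, B y⟫_ℂ).re = (⟪y, B x⟫_ℂ).re := by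
  rw [← hB, ← inner_conj_symm, Complex.conj_re]

/-- After expanding, the two sides differ by `Re⟪c²q + hσsΩq, Bz⟫ - Re⟪z, Bq⟫` for
`z = cq` and `z = σp`, which vanishes because `c² + hσsω = c² + s² = 1` and `B` is symmetric. -/
lemma re_inner_potential_rotate {h : ℝ} {ω c s σ : Fin d → ℝ} (hcs : ∀ i, c i ^ 2 + s i ^ 2 = 1)
    (hs : ∀ i, h * (ω i * σ i) = s i) {B : V →ₗ[ℂ] V} (hB : B.IsSymmetric) (q p : V) :
    (⟪dOp c (dOp c q + h • dOp σ p), B (dOp c q + h • dOp σ p)⟫_ℂ).re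
      = (⟪dOp c q, B q⟫_ℂ).re + h * (⟪p, dOp σ (B q)⟫_ℂ).re
        + h * (⟪dOp c p - dOp s (dOp ω q), dOp σ (B (dOp c q + h • dOp σ p))⟫_ℂ).re := by
  have hq : dOp c (dOp c q) + h • dOp σ (dOp s (dOp ω q)) = q := by
    rw [dOp_dOp, dOp_dOp, dOp_dOp, real_smul_dOp, dOp_add_dOp]
    convert dOp_one q using 2
    ext i
    simp only [Pi.add_apply, Pi.mul_apply, Pi.smul_apply, smul_eq_mul, Pi.one_apply]
    linear_combination hcs i + s i * hs i
  have hsplit (z : V) : (⟪dOp c (dOp c q), z⟫_ℂ).re + h * (⟪dOp σ (dOp s (dOp ω q)), z⟫_ℂ).re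
      = (⟪q, z⟫_ℂ).re := by
    simpa only [inner_add_left, Complex.add_re, re_inner_real_smul_left] using
      congrArg (fun v => (⟪v, z⟫_ℂ).re) hq
  have split_cq := hsplit (B (dOp c q))
  have split_σp := hsplit (B (dOp σ p))
  have symm_cq := re_inner_symm_of_isSymmetric hB q (dOp c q)
  have symm_σp := re_inner_symm_of_isSymmetric hB q (dOp σ p)
  simp only [map_add, LinearMap.map_smul_of_tower, dOp_add, dOp_real_smul, ← inner_dOp_left σ,
    dOp_sub, dOp_comm σ c, inner_add_left, inner_add_right, inner_sub_left,
    re_inner_real_smul_left, re_inner_real_smul_right, Complex.add_re, Complex.sub_re]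
  linear_combination split_cq + h * split_σp + symm_cq + h * symm_σp

/-- `p'` is the momentum after the first half kick, `(ΩQ, c p' - s Ωq)` is the rotation of
`(Ωq, p')`, and the last term of the new momentum is the second half kick. -/
theorem filteredEnergy_kick_rotate_kick {h : ℝ} {ω c s σ : Fin d → ℝ}
    (hcs : ∀ i, c i ^ 2 + s i ^ 2 = 1) (hs : ∀ i, h * (ω i * σ i) = s i)
    {B : V →ₗ[ℂ] V} (hB : B.IsSymmetric) {q p p' Q : V}
    (hp' : p' = p - (h / 2) • dOp σ (B q)) (hQ : Q = dOp c q + h • dOp σ p') :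
    filteredEnergy h ω c σ B Q (dOp c p' - dOp s (dOp ω q) - (h / 2) • dOp σ (B Q))
      = filteredEnergy h ω c σ B q p := by
  have hΩQ : dOp ω Q = dOp c (dOp ω q) + dOp s p' := by
    rw [hQ, dOp_add, dOp_real_smul, dOp_comm ω c, dOp_dOp ω σ, real_smul_dOp,
      show h • (ω * σ) = s from funext hs]
  have rotation := norm_rotate_sq_add hcs (dOp ω q) p'
  have potential := re_inner_potential_rotate hcs hs hB q p'
  have first_kick := norm_add_real_smul_sq p' (dOp σ (B q)) (h / 2)
  have second_kick := norm_add_real_smul_sq (dOp c p' - dOp s (dOp ω q)) (dOp σ (B Q)) (-(h / 2))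
  rw [hp', sub_add_cancel, ← hp'] at first_kick
  rw [neg_smul, ← sub_eq_add_neg] at second_kick
  rw [← hQ] at potential
  unfold filteredEnergy
  rw [hΩQ, second_kick, first_kick]
  linear_combination (1 / 2) * rotation + (1 / 2) * potential

noncomputable def dOpₗ (f : Fin d → ℝ) : V →ₗ[ℂ] V where
  toFun := dOp f
  map_add' := dOp_add f
  map_smul' := dOp_smul f

noncomputable def filteredOp (h : ℝ) (ω : Fin d → ℝ) (φ : ℝ → ℝ) (A : V →L[ℂ] V) : V →ₗ[ℂ] V :=
  dOpₗ (fun i => φ (h * ω i)) ∘ₗ (A : V →ₗ[ℂ] V) ∘ₗ dOpₗ (fun i => φ (h * ω i))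

lemma filteredOp_apply (h : ℝ) (ω : Fin d → ℝ) (φ : ℝ → ℝ) (A : V →L[ℂ] V) (x : V) :
    filteredOp h ω φ A x = dOp (fun i => φ (h * ω i)) (A (dOp (fun i => φ (h * ω i)) x)) := rfl

lemma isSymmetric_filteredOp (h : ℝ) (ω : Fin d → ℝ) (φ : ℝ → ℝ) {A : V →L[ℂ] V}
    (hA : IsSelfAdjoint A) : (filteredOp h ω φ A).IsSymmetric := fun x y => by
  rw [filteredOp_apply, filteredOp_apply, inner_dOp_left, ← inner_dOp_left _ x]
  exact hA.isSymmetric _ _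

variable {h : ℝ} {ω : Fin d → ℝ} {ψ₁ φ : ℝ → ℝ}

lemma dOp_psi (hψ : ∀ ξ, ψ₁ ξ = sinc ξ * φ ξ) (x : V) :
    dOp (fun i => ψ₁ (h * ω i)) x
      = dOp (fun i => sinc (h * ω i)) (dOp (fun i => φ (h * ω i)) x) := by
  rw [dOp_dOp]
  exact congrArg (dOp · x) (funext fun i => hψ _)

lemma modEnergy_eq_filteredEnergy (hψ : ∀ ξ, ψ₁ ξ = sinc ξ * φ ξ) (A : V →L[ℂ] V) (q p : V) :
    modEnergy h ω ψ₁ φ A q p = filteredEnergy h ω (fun i => Real.cos (h * ω i))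
      (fun i => sinc (h * ω i)) (filteredOp h ω φ A) q p := by
  rw [modEnergy, filteredEnergy, filteredOp_apply, dOp_psi hψ, ← inner_dOp_left, dOp_comm]

lemma trigStepQ_eq (hψ : ∀ ξ, ψ₁ ξ = sinc ξ * φ ξ) (A : V →L[ℂ] V) (q p : V) :
    trigStepQ h ω ψ₁ φ A q p = dOp (fun i => Real.cos (h * ω i)) q
      + h • dOp (fun i => sinc (h * ω i))
        (p - (h / 2) • dOp (fun i => sinc (h * ω i)) (filteredOp h ω φ A q)) := by
  rw [trigStepQ, dOp_psi hψ, filteredOp_apply]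
  simp only [dOp_neg, dOp_sub, dOp_real_smul, smul_neg, smul_sub, smul_smul]
  module

lemma trigStepP_eq (hψ : ∀ ξ, ψ₁ ξ = sinc ξ * φ ξ) (A : V →L[ℂ] V) (q p : V) :
    trigStepP h ω ψ₁ φ A q p = dOp (fun i => Real.cos (h * ω i))
        (p - (h / 2) • dOp (fun i => sinc (h * ω i)) (filteredOp h ω φ A q))
      - dOp (fun i => Real.sin (h * ω i)) (dOp ω q)
      - (h / 2) • dOp (fun i => sinc (h * ω i))
          (filteredOp h ω φ A (trigStepQ h ω ψ₁ φ A q p)) := by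
  rw [trigStepP, dOp_psi hψ, dOp_psi hψ, filteredOp_apply, filteredOp_apply, dOp_dOp _ ω,
    show (fun i => Real.sin (h * ω i)) * ω = fun i => ω i * Real.sin (h * ω i) from
      funext fun _ => mul_comm _ _]
  simp only [dOp_neg, dOp_sub, dOp_real_smul, smul_neg, smul_add]
  abel

theorem modEnergy_trigStep (hψ : ∀ ξ, ψ₁ ξ = sinc ξ * φ ξ) {A : V →L[ℂ] V} (hA : IsSelfAdjoint A)
    (q p : V) :
    modEnergy h ω ψ₁ φ A (trigStepQ h ω ψ₁ φ A q p) (trigStepP h ω ψ₁ φ A q p)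
      = modEnergy h ω ψ₁ φ A q p := by
  rw [modEnergy_eq_filteredEnergy hψ, modEnergy_eq_filteredEnergy hψ, trigStepP_eq hψ]
  refine filteredEnergy_kick_rotate_kick (fun i => Real.cos_sq_add_sin_sq _) (fun i => ?_)
    (isSymmetric_filteredOp h ω φ hA) rfl (trigStepQ_eq hψ A q p)
  rw [← mul_assoc, mul_sinc]

theorem modEnergy_trigStep_iterate (hψ : ∀ ξ, ψ₁ ξ = sinc ξ * φ ξ) {A : V →L[ℂ] V}
    (hA : IsSelfAdjoint A) {q p : ℕ → V} (hq : ∀ n, q (n + 1) = trigStepQ h ω ψ₁ φ A (q n) (p n))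
    (hp : ∀ n, p (n + 1) = trigStepP h ω ψ₁ φ A (q n) (p n)) (n : ℕ) :
    modEnergy h ω ψ₁ φ A (q n) (p n) = modEnergy h ω ψ₁ φ A (q 0) (p 0) := by
  induction n with
  | zero => rfl
  | succ n ih => rw [hq, hp, modEnergy_trigStep hψ hA, ih]

variable {c₀ ωmin : ℝ} {A : EuclideanSpace ℂ (Fin d) →L[ℂ] EuclideanSpace ℂ (Fin d)}

lemma sq_mul_norm_dOp_psi_le (hψ : ∀ ξ, ψ₁ ξ = sinc ξ * φ ξ) (hφb : ∀ ξ, |φ ξ| ≤ c₀)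
    (hωmin : 0 < ωmin) (hω : ∀ i, ωmin ≤ ω i) (z : V) :
    (h * ‖dOp (fun i => ψ₁ (h * ω i)) z‖) ^ 2 ≤ (c₀ / ωmin * ‖z‖) ^ 2 := by
  have hc₀ : 0 ≤ c₀ := (abs_nonneg _).trans (hφb 0)
  have hpt (i : Fin d) : |h * ψ₁ (h * ω i)| ≤ c₀ / ωmin := by
    have hωi : 0 < ω i := hωmin.trans_le (hω i)
    have := abs_mul_psi_mul_le hψ hφb h (ω i)
    rw [abs_mul, abs_of_pos hωi, ← le_div_iff₀ hωi] at this
    exact this.trans (div_le_div_of_nonneg_left hc₀ hωmin (hω i))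
  have := norm_dOp_le (by positivity) hpt z
  rw [show (fun i => h * ψ₁ (h * ω i)) = h • fun i => ψ₁ (h * ω i) from rfl, ← real_smul_dOp,
    norm_smul, Real.norm_eq_abs] at this
  rw [mul_pow, ← sq_abs h, ← mul_pow]
  exact pow_le_pow_left₀ (by positivity) this 2

theorem abs_modEnergy_sub_le (hψ : ∀ ξ, ψ₁ ξ = sinc ξ * φ ξ) (hφb : ∀ ξ, |φ ξ| ≤ c₀)
    (hω : ∀ i, ωmin ≤ ω i) (hbig : (1 / 2) * c₀ ^ 2 * ‖A‖ + 1 ≤ ωmin) (q p : V) :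
    |modEnergy h ω ψ₁ φ A q p - ((1 / 2) * ‖dOp ω q‖ ^ 2 + (1 / 2) * ‖p‖ ^ 2)|
      ≤ (3 / 8) * ‖dOp ω q‖ ^ 2 := by
  set w := dOp (fun i => φ (h * ω i)) q
  have hc₀ : 0 ≤ c₀ := (abs_nonneg _).trans (hφb 0)
  have hωmin : 0 < ωmin := by nlinarith [norm_nonneg A]
  have hw : ‖w‖ ≤ c₀ * ‖q‖ := norm_dOp_le hc₀ (fun i => hφb _) q
  have hAw : ‖A w‖ ≤ ‖A‖ * (c₀ * ‖q‖) := A.le_opNorm_of_le hw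
  have hcw : ‖dOp (fun i => Real.cos (h * ω i)) w‖ ≤ c₀ * ‖q‖ :=
    (norm_dOp_le zero_le_one (fun i => Real.abs_cos_le_one _) w).trans (by rwa [one_mul])
  have potential : |(⟪dOp (fun i => Real.cos (h * ω i)) w, A w⟫_ℂ).re|
      ≤ c₀ ^ 2 * ‖A‖ * ‖q‖ ^ 2 :=
    (abs_re_inner_le_mul hcw hAw).trans_eq (by ring)
  have force : (h * ‖dOp (fun i => ψ₁ (h * ω i)) (A w)‖) ^ 2
      ≤ (c₀ ^ 2 * ‖A‖ / ωmin) ^ 2 * ‖q‖ ^ 2 :=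
    (sq_mul_norm_dOp_psi_le hψ hφb hωmin hω (A w)).trans <|
      (pow_le_pow_left₀ (by positivity) (mul_le_mul_of_nonneg_left hAw (by positivity)) 2).trans_eq
        (by ring)
  have coeff := coercivity_coeff_le (by positivity) (by linarith : c₀ ^ 2 * ‖A‖ ≤ 2 * (ωmin - 1))
    (t := ‖q‖)
  have hq : (3 / 8) * (ωmin * ‖q‖) ^ 2 ≤ (3 / 8) * ‖dOp ω q‖ ^ 2 := by
    gcongr
    exact mul_norm_le_norm_dOp hωmin (fun i => (hω i).trans (le_abs_self _)) q
  have hdiff : modEnergy h ω ψ₁ φ A q p - ((1 / 2) * ‖dOp ω q‖ ^ 2 + (1 / 2) * ‖p‖ ^ 2)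
      = (1 / 2) * (⟪dOp (fun i => Real.cos (h * ω i)) w, A w⟫_ℂ).re
        - (1 / 8) * (h * ‖dOp (fun i => ψ₁ (h * ω i)) (A w)‖) ^ 2 := by
    rw [modEnergy]; ring
  rw [hdiff, abs_le]
  constructor <;>
    nlinarith [abs_le.1 potential, sq_nonneg (h * ‖dOp (fun i => ψ₁ (h * ω i)) (A w)‖)]

lemma energy_sub_modEnergy (q p : V) :
    energy ω A q p - modEnergy h ω ψ₁ φ A q p
      = (1 / 2) * (⟪q - dOp (fun i => Real.cos (h * ω i)) (dOp (fun i => φ (h * ω i)) q), A q⟫_ℂ).re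
        + (1 / 2) * (⟪dOp (fun i => Real.cos (h * ω i)) (dOp (fun i => φ (h * ω i)) q),
            A (q - dOp (fun i => φ (h * ω i)) q)⟫_ℂ).re
        + (1 / 8) * (h * ‖dOp (fun i => ψ₁ (h * ω i)) (A (dOp (fun i => φ (h * ω i)) q))‖) ^ 2 := by
  rw [energy, modEnergy, inner_sub_left, map_sub, inner_sub_right, Complex.sub_re, Complex.sub_re]
  ring

lemma norm_sub_dOp_phi_le {c₁ : ℝ} (hh : 0 ≤ h) (hφb : ∀ ξ, |φ ξ| ≤ c₀)
    (hφ1 : ∀ ξ, |φ ξ - 1| ≤ c₁ * |ξ|) (hωmin : 0 < ωmin) (hω : ∀ i, ωmin ≤ ω i) (q : V) :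
    ‖q - dOp (fun i => φ (h * ω i)) q‖ ≤ (2 + c₀ + c₁) * min h ωmin⁻¹ * ‖dOp ω q‖ := by
  have hc₀ : 0 ≤ c₀ := (abs_nonneg _).trans (hφb 0)
  have hc₁ := nonneg_of_abs_sub_one_le hφ1
  exact (norm_sub_dOp_le_mul_min (by linarith) (by linarith) (abs_one_sub_le hφb)
    (abs_one_sub_le_mul hφ1) hh hωmin hω q).trans_eq (by ring)

lemma norm_sub_dOp_cos_dOp_phi_le {c₁ : ℝ} (hh : 0 ≤ h) (hφb : ∀ ξ, |φ ξ| ≤ c₀)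
    (hφ1 : ∀ ξ, |φ ξ - 1| ≤ c₁ * |ξ|) (hωmin : 0 < ωmin) (hω : ∀ i, ωmin ≤ ω i) (q : V) :
    ‖q - dOp (fun i => Real.cos (h * ω i)) (dOp (fun i => φ (h * ω i)) q)‖
      ≤ (2 + c₀ + c₁) * min h ωmin⁻¹ * ‖dOp ω q‖ := by
  have hc₀ : 0 ≤ c₀ := (abs_nonneg _).trans (hφb 0)
  have hc₁ := nonneg_of_abs_sub_one_le hφ1
  rw [dOp_dOp]
  exact (norm_sub_dOp_le_mul_min (by linarith) (by linarith) (abs_one_sub_cos_mul_le hφb)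
    (abs_one_sub_cos_mul_le_mul hφ1) hh hωmin hω q).trans_eq (by ring)

lemma sq_mul_opNorm_mul_norm_le (hω : ∀ i, ωmin ≤ ω i) (hbig : (1 / 2) * c₀ ^ 2 * ‖A‖ + 1 ≤ ωmin)
    (q : V) : c₀ ^ 2 * (‖A‖ * ‖q‖) ≤ 2 * ‖dOp ω q‖ := by
  have hωmin : 0 < ωmin := by nlinarith [norm_nonneg A]
  have hq := mul_norm_le_norm_dOp hωmin (fun i => (hω i).trans (le_abs_self _)) q
  nlinarith [norm_nonneg q]

theorem abs_energy_sub_modEnergy_le {c₁ : ℝ} (hh : 0 ≤ h) (hψb : ∀ ξ, |ψ₁ ξ| ≤ c₀)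
    (hφb : ∀ ξ, |φ ξ| ≤ c₀) (hφ1 : ∀ ξ, |φ ξ - 1| ≤ c₁ * |ξ|) (hω : ∀ i, ωmin ≤ ω i)
    (hbig : (1 / 2) * c₀ ^ 2 * ‖A‖ + 1 ≤ ωmin) (q p : V) :
    |energy ω A q p - modEnergy h ω ψ₁ φ A q p|
      ≤ 2 * (2 + c₀ + c₁) * min h ωmin⁻¹ * ‖dOp ω q‖ ^ 2 + (1 / 2) * h ^ 2 * ‖dOp ω q‖ ^ 2 := by
  rw [energy_sub_modEnergy]
  set w := dOp (fun i => φ (h * ω i)) q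
  set X := ‖dOp ω q‖
  set δ := (2 + c₀ + c₁) * min h ωmin⁻¹ * X
  have hc₀ : 1 ≤ c₀ := one_le_of_abs_le_of_abs_sub_one_le hφb hφ1
  have hωmin : 0 < ωmin := by nlinarith [norm_nonneg A]
  have hδ : 0 ≤ δ := by
    have := nonneg_of_abs_sub_one_le hφ1
    have := le_min hh (inv_nonneg.2 hωmin.le)
    positivity
  have hAq : 0 ≤ ‖A‖ * ‖q‖ := by positivity
  have hA₂ : c₀ ^ 2 * (‖A‖ * ‖q‖) ≤ 2 * X := sq_mul_opNorm_mul_norm_le hω hbig q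
  have hA₁ : c₀ * (‖A‖ * ‖q‖) ≤ 2 * X :=
    (mul_le_mul_of_nonneg_right (by nlinarith) hAq).trans hA₂
  have hA₀ : ‖A‖ * ‖q‖ ≤ 2 * X := (le_mul_of_one_le_left hAq hc₀).trans hA₁
  have hw : ‖w‖ ≤ c₀ * ‖q‖ := norm_dOp_le (by linarith) (fun i => hφb _) q
  have hcw : ‖dOp (fun i => Real.cos (h * ω i)) w‖ ≤ c₀ * ‖q‖ :=
    (norm_dOp_le zero_le_one (fun i => Real.abs_cos_le_one _) w).trans (by rwa [one_mul])
  have term₁ : |(⟪q - dOp (fun i => Real.cos (h * ω i)) w, A q⟫_ℂ).re| ≤ 2 * δ * X :=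
    (abs_re_inner_le_mul (norm_sub_dOp_cos_dOp_phi_le hh hφb hφ1 hωmin hω q)
      (A.le_opNorm q)).trans (by nlinarith [mul_le_mul_of_nonneg_left hA₀ hδ])
  have term₂ : |(⟪dOp (fun i => Real.cos (h * ω i)) w, A (q - w)⟫_ℂ).re| ≤ 2 * δ * X :=
    (abs_re_inner_le_mul hcw (A.le_opNorm_of_le (norm_sub_dOp_phi_le hh hφb hφ1 hωmin hω q))).trans
      (by nlinarith [mul_le_mul_of_nonneg_right hA₁ hδ])
  have term₃ : (h * ‖dOp (fun i => ψ₁ (h * ω i)) (A w)‖) ^ 2 ≤ (2 * h * X) ^ 2 := by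
    refine pow_le_pow_left₀ (by positivity) ?_ 2
    calc h * ‖dOp (fun i => ψ₁ (h * ω i)) (A w)‖ ≤ h * (c₀ * (‖A‖ * (c₀ * ‖q‖))) :=
          mul_le_mul_of_nonneg_left ((norm_dOp_le (by linarith) (fun i => hψb _) _).trans
            (mul_le_mul_of_nonneg_left (A.le_opNorm_of_le hw) (by linarith))) hh
      _ ≤ 2 * h * X := by nlinarith [mul_le_mul_of_nonneg_left hA₂ hh]
  rw [abs_le]
  constructor <;> nlinarith [abs_le.1 term₁, abs_le.1 term₂,
    sq_nonneg (h * ‖dOp (fun i => ψ₁ (h * ω i)) (A w)‖)]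

theorem norm_dOp_sq_le_of_modEnergy_eq (hψ : ∀ ξ, ψ₁ ξ = sinc ξ * φ ξ) (hφb : ∀ ξ, |φ ξ| ≤ c₀)
    (hω : ∀ i, ωmin ≤ ω i) (hbig : (1 / 2) * c₀ ^ 2 * ‖A‖ + 1 ≤ ωmin) {q p q₀ p₀ : V}
    (hE : modEnergy h ω ψ₁ φ A q p = modEnergy h ω ψ₁ φ A q₀ p₀) :
    ‖dOp ω q‖ ^ 2 ≤ 7 * ‖dOp ω q₀‖ ^ 2 + 4 * ‖p₀‖ ^ 2 := by
  have h₁ := (abs_le.1 (abs_modEnergy_sub_le (h := h) hψ hφb hω hbig q p)).1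
  have h₀ := (abs_le.1 (abs_modEnergy_sub_le (h := h) hψ hφb hω hbig q₀ p₀)).2
  nlinarith [sq_nonneg ‖p‖]

theorem abs_energy_sub_le_of_modEnergy_eq {c₁ : ℝ} (hh : 0 ≤ h) (hψ : ∀ ξ, ψ₁ ξ = sinc ξ * φ ξ)
    (hψb : ∀ ξ, |ψ₁ ξ| ≤ c₀) (hφb : ∀ ξ, |φ ξ| ≤ c₀) (hφ1 : ∀ ξ, |φ ξ - 1| ≤ c₁ * |ξ|)
    (hω : ∀ i, ωmin ≤ ω i) (hbig : (1 / 2) * c₀ ^ 2 * ‖A‖ + 1 ≤ ωmin) {q p q₀ p₀ : V}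
    (hE : modEnergy h ω ψ₁ φ A q p = modEnergy h ω ψ₁ φ A q₀ p₀) :
    |energy ω A q p - energy ω A q₀ p₀|
      ≤ 4 * (2 + c₀ + c₁) * (7 * ‖dOp ω q₀‖ ^ 2 + 4 * ‖p₀‖ ^ 2) * min h ωmin⁻¹
        + 4 * (2 + c₀ + c₁) * (7 * ‖dOp ω q₀‖ ^ 2 + 4 * ‖p₀‖ ^ 2) * h ^ 2 := by
  have hc₀ := one_le_of_abs_le_of_abs_sub_one_le hφb hφ1
  have hc₁ := nonneg_of_abs_sub_one_le hφ1
  have hK : 0 ≤ 2 * (2 + c₀ + c₁) * min h ωmin⁻¹ :=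
    mul_nonneg (by linarith) (le_min hh (inv_nonneg.2 (by nlinarith [norm_nonneg A])))
  have hX := norm_dOp_sq_le_of_modEnergy_eq hψ hφb hω hbig hE
  have hX₀ : ‖dOp ω q₀‖ ^ 2 ≤ 7 * ‖dOp ω q₀‖ ^ 2 + 4 * ‖p₀‖ ^ 2 := by
    nlinarith [sq_nonneg ‖dOp ω q₀‖, sq_nonneg ‖p₀‖]
  have hR : 0 ≤ (4 * (2 + c₀ + c₁) - 1) * (7 * ‖dOp ω q₀‖ ^ 2 + 4 * ‖p₀‖ ^ 2) * h ^ 2 :=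
    mul_nonneg (mul_nonneg (by linarith) (by positivity)) (sq_nonneg h)
  have hfar := abs_energy_sub_modEnergy_le hh hψb hφb hφ1 hω hbig q p
  have hnear := abs_energy_sub_modEnergy_le hh hψb hφb hφ1 hω hbig q₀ p₀
  have htri : |energy ω A q p - energy ω A q₀ p₀| ≤ |energy ω A q p - modEnergy h ω ψ₁ φ A q p|
      + |energy ω A q₀ p₀ - modEnergy h ω ψ₁ φ A q₀ p₀| := by
    rw [hE, abs_sub_comm (energy ω A q₀ p₀)]
    exact abs_sub_le _ _ _
  nlinarith [mul_le_mul_of_nonneg_left hX hK, mul_le_mul_of_nonneg_left hX₀ hK,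
    mul_le_mul_of_nonneg_left hX (sq_nonneg h), mul_le_mul_of_nonneg_left hX₀ (sq_nonneg h)]

end

/-- Theorem 3, unconditional numerical energy conservation: if all frequencies
are nonzero and `ω ≥ ½c₀²‖A‖ + 1`, there is a constant `C` depending only on
`c₀, c₁, ‖A‖, ‖Ωq_0‖, ‖q̇_0‖` with `|H(q_n,q̇_n) − H(q_0,q̇_0)| ≤ C min(h, ω⁻¹) + C h²`. -/
theorem unconditional_energy_conservation :
    ∃ C : ℝ → ℝ → ℝ → ℝ → ℝ → ℝ,
      ∀ {d : ℕ} (h : ℝ), 0 < h → h ≤ 1 →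
      ∀ (ω : Fin d → ℝ), (∀ i, 0 ≤ ω i) → (∀ i, ω i ≠ 0) →
      ∀ (ψ₁ φ : ℝ → ℝ) (c₀ c₁ : ℝ),
        (∀ ξ : ℝ, ψ₁ ξ = sinc ξ * φ ξ) →
        (∀ ξ : ℝ, |ψ₁ ξ| ≤ c₀) → (∀ ξ : ℝ, |φ ξ| ≤ c₀) →
        (∀ ξ : ℝ, |φ ξ - 1| ≤ c₁ * |ξ|) →
      ∀ A : EuclideanSpace ℂ (Fin d) →L[ℂ] EuclideanSpace ℂ (Fin d), IsSelfAdjoint A →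
      ∀ ωmin : ℝ, (∃ i, ω i = ωmin) → (∀ i, ωmin ≤ ω i) →
        (1 / 2) * c₀ ^ 2 * ‖A‖ + 1 ≤ ωmin →
      ∀ q p : ℕ → EuclideanSpace ℂ (Fin d),
        (∀ n : ℕ, q (n + 1) = trigStepQ h ω ψ₁ φ A (q n) (p n)) →
        (∀ n : ℕ, p (n + 1) = trigStepP h ω ψ₁ φ A (q n) (p n)) →
      ∀ n : ℕ,
        |energy ω A (q n) (p n) - energy ω A (q 0) (p 0)|
          ≤ C c₀ c₁ ‖A‖ ‖dOp ω (q 0)‖ ‖p 0‖ * min h ωmin⁻¹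
            + C c₀ c₁ ‖A‖ ‖dOp ω (q 0)‖ ‖p 0‖ * h ^ 2 := by
  refine ⟨fun c₀ c₁ _ Q P => 4 * (2 + c₀ + c₁) * (7 * Q ^ 2 + 4 * P ^ 2), ?_⟩
  intro d h hh _ ω _ _ ψ₁ φ c₀ c₁ hψ hψb hφb hφ1 A hA ωmin _ hω hbig q p hq hp n
  exact abs_energy_sub_le_of_modEnergy_eq hh.le hψ hψb hφb hφ1 hω hbig
    (modEnergy_trigStep_iterate hψ hA hq hp n)
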